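/- Let h : (0,∞) → ℝ be smooth and ε > 0, and define on {(r,s) ∈ ℝ² : 0 < s < r} the function φ(r,s) := s·h(r) + √π·s·e^{r²}·(r⁴ + r² + ε − 1/4)·erf(s) + e^{r² − s²}·(r⁴ + s²/2 + ε), where erf(s) = (2/√π)·∫₀ˢ e^{−t²} dt. Then √(r² − s²)·(φ − s·φ_s) = √(r² − s²)·((r² − s²)² + ε)·e^{r² − s²}, and consequently r·φ_ss + s·φ_rs − φ_r = 0 on this domain. -/

import Mathlib

/-- Partial derivative with respect to the first variable `r`. -/
noncomputable def pderivR (f : ℝ → ℝ → ℝ) (r s : ℝ) : ℝ := deriv (fun t => f t s) r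

/-- Partial derivative with respect to the second variable `s`. -/
noncomputable def pderivS (f : ℝ → ℝ → ℝ) (r s : ℝ) : ℝ := deriv (fun t => f r t) s

/-- The Gauss error function `erf(s) = (2/√π)·∫₀ˢ e^{−t²} dt`. -/
noncomputable def erf (s : ℝ) : ℝ :=
  (2 / Real.sqrt Real.pi) * ∫ t in (0 : ℝ)..s, Real.exp (-t ^ 2)

lemma erf_hasDerivAt (s : ℝ) :
    HasDerivAt erf (2 / Real.sqrt Real.pi * Real.exp (-s ^ 2)) s := by
  have hc : Continuous fun t : ℝ => Real.exp (-t ^ 2) := by continuity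
  have H : HasDerivAt (fun u => ∫ t in (0:ℝ)..u, Real.exp (-t ^ 2)) (Real.exp (-s ^ 2)) s :=
    intervalIntegral.integral_hasDerivAt_right (hc.intervalIntegrable 0 s)
      (hc.stronglyMeasurableAtFilter _ _) hc.continuousAt
  exact H.const_mul (2 / Real.sqrt Real.pi)

lemma exp_negsq_hasDerivAt (s : ℝ) :
    HasDerivAt (fun t : ℝ => Real.exp (-t ^ 2)) (Real.exp (-s ^ 2) * -(2 * s)) s := by
  have hp : HasDerivAt (fun t : ℝ => -t ^ 2) (-(2 * s)) s := by
    have h0 := (hasDerivAt_pow 2 s).neg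
    simp at h0
    exact h0
  exact hp.exp

lemma exp_sq_hasDerivAt (r : ℝ) :
    HasDerivAt (fun t : ℝ => Real.exp (t ^ 2)) (Real.exp (r ^ 2) * (2 * r)) r := by
  have hp : HasDerivAt (fun t : ℝ => t ^ 2) (2 * r) r := by simpa using hasDerivAt_pow 2 r
  exact hp.exp

/-- Closed form for the partial derivative `φ_s`. -/
noncomputable def GS (h : ℝ → ℝ) (ε r s : ℝ) : ℝ :=
  h r + Real.sqrt Real.pi * Real.exp (r ^ 2) * (r ^ 4 + r ^ 2 + ε - 1 / 4) * erf s
    + 2 * Real.exp (r ^ 2) * (r ^ 4 + r ^ 2 + ε - 1 / 4) * s * Real.exp (-s ^ 2)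
    + Real.exp (r ^ 2) * Real.exp (-s ^ 2) * (s - 2 * s * (r ^ 4 + s ^ 2 / 2 + ε))

lemma lemS (h : ℝ → ℝ) (ε r s : ℝ) :
    HasDerivAt (fun t =>
      t * h r
        + Real.sqrt Real.pi * t * Real.exp (r ^ 2) * (r ^ 4 + r ^ 2 + ε - 1 / 4) * erf t
        + Real.exp (r ^ 2 - t ^ 2) * (r ^ 4 + t ^ 2 / 2 + ε))
      (GS h ε r s) s := by
  have e : (fun t =>
      t * h r
        + Real.sqrt Real.pi * t * Real.exp (r ^ 2) * (r ^ 4 + r ^ 2 + ε - 1 / 4) * erf t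
        + Real.exp (r ^ 2 - t ^ 2) * (r ^ 4 + t ^ 2 / 2 + ε))
      = (fun t => t * h r
        + (Real.sqrt Real.pi * Real.exp (r ^ 2) * (r ^ 4 + r ^ 2 + ε - 1 / 4)) * (t * erf t)
        + Real.exp (r ^ 2) * (Real.exp (-t ^ 2) * (r ^ 4 + t ^ 2 / 2 + ε))) := by
    funext t
    rw [show r ^ 2 - t ^ 2 = r ^ 2 + -t ^ 2 by ring, Real.exp_add]
    ring
  rw [e]
  have h1 : HasDerivAt (fun t : ℝ => t * h r) (1 * h r) s := (hasDerivAt_id s).mul_const _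
  have h2 := ((hasDerivAt_id s).mul (erf_hasDerivAt s)).const_mul
    (Real.sqrt Real.pi * Real.exp (r ^ 2) * (r ^ 4 + r ^ 2 + ε - 1 / 4))
  have hg : HasDerivAt (fun t : ℝ => r ^ 4 + t ^ 2 / 2 + ε) ((2 : ℕ) * s ^ 1 / 2) s :=
    (((hasDerivAt_pow 2 s).div_const 2).const_add (r ^ 4)).add_const ε
  have h3 := ((exp_negsq_hasDerivAt s).mul hg).const_mul (Real.exp (r ^ 2))
  have H := (h1.add h2).add h3
  refine H.congr_deriv ?_
  unfold GS
  simp only [id]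
  field_simp
  ring

lemma lemSS (h : ℝ → ℝ) (ε r s : ℝ) :
    HasDerivAt (fun t => GS h ε r t)
      (Real.exp (r ^ 2) * Real.exp (-s ^ 2) *
        (2 * r ^ 4 + 4 * r ^ 2 + 2 * ε - 4 * r ^ 2 * s ^ 2 - 4 * s ^ 2 + 2 * s ^ 4)) s := by
  have e : (fun t => GS h ε r t)
      = (fun t => h r
        + (Real.sqrt Real.pi * Real.exp (r ^ 2) * (r ^ 4 + r ^ 2 + ε - 1 / 4)) * erf t
        + (2 * Real.exp (r ^ 2) * (r ^ 4 + r ^ 2 + ε - 1 / 4)) * (t * Real.exp (-t ^ 2))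
        + Real.exp (r ^ 2) * (Real.exp (-t ^ 2) * (t - 2 * t * (r ^ 4 + t ^ 2 / 2 + ε)))) := by
    funext t; unfold GS; ring
  rw [e]
  have h1 : HasDerivAt (fun _ : ℝ => h r) 0 s := hasDerivAt_const s _
  have h2 := (erf_hasDerivAt s).const_mul
    (Real.sqrt Real.pi * Real.exp (r ^ 2) * (r ^ 4 + r ^ 2 + ε - 1 / 4))
  have h3 := ((hasDerivAt_id s).mul (exp_negsq_hasDerivAt s)).const_mul
    (2 * Real.exp (r ^ 2) * (r ^ 4 + r ^ 2 + ε - 1 / 4))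
  have hg : HasDerivAt (fun t : ℝ => r ^ 4 + t ^ 2 / 2 + ε) ((2 : ℕ) * s ^ 1 / 2) s :=
    (((hasDerivAt_pow 2 s).div_const 2).const_add (r ^ 4)).add_const ε
  have hv : HasDerivAt (fun t : ℝ => t - 2 * t * (r ^ 4 + t ^ 2 / 2 + ε))
      (1 - ((2 * 1) * (r ^ 4 + s ^ 2 / 2 + ε) + (2 * s) * ((2 : ℕ) * s ^ 1 / 2))) s :=
    (hasDerivAt_id s).sub (((hasDerivAt_id s).const_mul 2).mul hg)
  have h4 := ((exp_negsq_hasDerivAt s).mul hv).const_mul (Real.exp (r ^ 2))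
  have H := ((h1.add h2).add h3).add h4
  refine H.congr_deriv ?_
  simp only [id]
  field_simp
  ring

lemma lemRS (h : ℝ → ℝ) (ε r s : ℝ) (h' : ℝ) (hd : HasDerivAt h h' r) :
    HasDerivAt (fun t => GS h ε t s)
      (h' + (Real.sqrt Real.pi * erf s + 2 * s * Real.exp (-s ^ 2)) * Real.exp (r ^ 2) *
          (2 * r * (r ^ 4 + r ^ 2 + ε - 1 / 4) + 4 * r ^ 3 + 2 * r)
        + Real.exp (r ^ 2) * Real.exp (-s ^ 2) *
          (2 * r * (s - 2 * s * (r ^ 4 + s ^ 2 / 2 + ε)) - 8 * s * r ^ 3)) r := by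
  have e : (fun t => GS h ε t s)
      = (fun t => h t
        + (Real.sqrt Real.pi * erf s) * (Real.exp (t ^ 2) * (t ^ 4 + t ^ 2 + ε - 1 / 4))
        + (2 * s * Real.exp (-s ^ 2)) * (Real.exp (t ^ 2) * (t ^ 4 + t ^ 2 + ε - 1 / 4))
        + Real.exp (-s ^ 2) * (Real.exp (t ^ 2) * (s - 2 * s * (t ^ 4 + s ^ 2 / 2 + ε)))) := by
    funext t; unfold GS; ring
  rw [e]
  have hK : HasDerivAt (fun t : ℝ => t ^ 4 + t ^ 2 + ε - 1 / 4)
      ((4 : ℕ) * r ^ 3 + (2 : ℕ) * r ^ 1) r :=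
    (((hasDerivAt_pow 4 r).add (hasDerivAt_pow 2 r)).add_const ε).sub_const _
  have hEK := (exp_sq_hasDerivAt r).mul hK
  have h2 := hEK.const_mul (Real.sqrt Real.pi * erf s)
  have h3 := hEK.const_mul (2 * s * Real.exp (-s ^ 2))
  have hv : HasDerivAt (fun t : ℝ => s - 2 * s * (t ^ 4 + s ^ 2 / 2 + ε))
      (0 - 2 * s * ((4 : ℕ) * r ^ 3)) r := by
    exact (hasDerivAt_const r s).sub
      ((((hasDerivAt_pow 4 r).add_const (s ^ 2 / 2)).add_const ε).const_mul (2 * s))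
  have h4 := ((exp_sq_hasDerivAt r).mul hv).const_mul (Real.exp (-s ^ 2))
  have H := ((hd.add h2).add h3).add h4
  refine H.congr_deriv ?_
  push_cast
  ring

lemma lemR (h : ℝ → ℝ) (ε r s : ℝ) (h' : ℝ) (hd : HasDerivAt h h' r) :
    HasDerivAt (fun t =>
      s * h t
        + Real.sqrt Real.pi * s * Real.exp (t ^ 2) * (t ^ 4 + t ^ 2 + ε - 1 / 4) * erf s
        + Real.exp (t ^ 2 - s ^ 2) * (t ^ 4 + s ^ 2 / 2 + ε))
      (s * h' + Real.sqrt Real.pi * s * erf s * Real.exp (r ^ 2) *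
          (2 * r * (r ^ 4 + r ^ 2 + ε - 1 / 4) + 4 * r ^ 3 + 2 * r)
        + Real.exp (r ^ 2) * Real.exp (-s ^ 2) *
          (2 * r * (r ^ 4 + s ^ 2 / 2 + ε) + 4 * r ^ 3)) r := by
  have e : (fun t =>
      s * h t
        + Real.sqrt Real.pi * s * Real.exp (t ^ 2) * (t ^ 4 + t ^ 2 + ε - 1 / 4) * erf s
        + Real.exp (t ^ 2 - s ^ 2) * (t ^ 4 + s ^ 2 / 2 + ε))
      = (fun t => s * h t
        + (Real.sqrt Real.pi * s * erf s) * (Real.exp (t ^ 2) * (t ^ 4 + t ^ 2 + ε - 1 / 4))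
        + Real.exp (-s ^ 2) * (Real.exp (t ^ 2) * (t ^ 4 + s ^ 2 / 2 + ε))) := by
    funext t
    rw [show t ^ 2 - s ^ 2 = t ^ 2 + -s ^ 2 by ring, Real.exp_add]
    ring
  rw [e]
  have h1 := hd.const_mul s
  have hK : HasDerivAt (fun t : ℝ => t ^ 4 + t ^ 2 + ε - 1 / 4)
      ((4 : ℕ) * r ^ 3 + (2 : ℕ) * r ^ 1) r :=
    (((hasDerivAt_pow 4 r).add (hasDerivAt_pow 2 r)).add_const ε).sub_const _
  have h2 := ((exp_sq_hasDerivAt r).mul hK).const_mul (Real.sqrt Real.pi * s * erf s)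
  have hg : HasDerivAt (fun t : ℝ => t ^ 4 + s ^ 2 / 2 + ε) ((4 : ℕ) * r ^ 3) r :=
    ((hasDerivAt_pow 4 r).add_const (s ^ 2 / 2)).add_const ε
  have h3 := ((exp_sq_hasDerivAt r).mul hg).const_mul (Real.exp (-s ^ 2))
  have H := (h1.add h2).add h3
  refine H.congr_deriv ?_
  push_cast
  ring

/-- Corollary 2, member `m = 2` (Example 5): for
`φ(r,s) := s·h(r) + √π·s·e^{r²}·(r⁴ + r² + ε − 1/4)·erf(s)
+ e^{r² − s²}·(r⁴ + s²/2 + ε)` one has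
`√(r² − s²)·(φ − s·φ_s) = √(r² − s²)·((r² − s²)² + ε)·e^{r² − s²}`, and
consequently `r·φ_ss + s·φ_rs − φ_r = 0` on `{0 < s < r}`. -/
theorem stmt_19 (h : ℝ → ℝ) (hh : ContDiffOn ℝ (⊤ : ℕ∞) h (Set.Ioi 0)) (ε : ℝ) (hε : 0 < ε)
    (φ : ℝ → ℝ → ℝ)
    (hφ : ∀ r s : ℝ, φ r s =
      s * h r
        + Real.sqrt Real.pi * s * Real.exp (r ^ 2) * (r ^ 4 + r ^ 2 + ε - 1 / 4) * erf s
        + Real.exp (r ^ 2 - s ^ 2) * (r ^ 4 + s ^ 2 / 2 + ε)) :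
    ∀ r s : ℝ, 0 < s → s < r →
      Real.sqrt (r ^ 2 - s ^ 2) * (φ r s - s * pderivS φ r s)
          = Real.sqrt (r ^ 2 - s ^ 2) * ((r ^ 2 - s ^ 2) ^ 2 + ε) *
              Real.exp (r ^ 2 - s ^ 2)
      ∧ r * pderivS (pderivS φ) r s + s * pderivR (pderivS φ) r s
          - pderivR φ r s = 0 := by
  intro r s hs hsr
  have hr0 : 0 < r := hs.trans hsr
  have hd : HasDerivAt h (deriv h r) r :=
    ((hh.differentiableOn (by simp)).differentiableAt (Ioi_mem_nhds hr0)).hasDerivAt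
  have hSd : ∀ r' s' : ℝ, pderivS φ r' s' = GS h ε r' s' := by
    intro r' s'
    have e : (fun t => φ r' t) = (fun t =>
        t * h r'
          + Real.sqrt Real.pi * t * Real.exp (r' ^ 2) * (r' ^ 4 + r' ^ 2 + ε - 1 / 4) * erf t
          + Real.exp (r' ^ 2 - t ^ 2) * (r' ^ 4 + t ^ 2 / 2 + ε)) := funext fun t => hφ r' t
    show deriv (fun t => φ r' t) s' = _
    rw [e]
    exact (lemS h ε r' s').deriv
  have hEE : Real.exp (r ^ 2 - s ^ 2) = Real.exp (r ^ 2) * Real.exp (-s ^ 2) := by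
    rw [← Real.exp_add]; ring_nf
  constructor
  · rw [hSd, hφ, hEE]
    unfold GS
    ring
  · have e1 : (fun t => pderivS φ r t) = fun t => GS h ε r t := funext fun t => hSd r t
    have e2 : (fun t => pderivS φ t s) = fun t => GS h ε t s := funext fun t => hSd t s
    have A1 : pderivS (pderivS φ) r s =
        Real.exp (r ^ 2) * Real.exp (-s ^ 2) *
          (2 * r ^ 4 + 4 * r ^ 2 + 2 * ε - 4 * r ^ 2 * s ^ 2 - 4 * s ^ 2 + 2 * s ^ 4) := by
      show deriv (fun t => pderivS φ r t) s = _
      rw [e1]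
      exact (lemSS h ε r s).deriv
    have A2 : pderivR (pderivS φ) r s =
        deriv h r + (Real.sqrt Real.pi * erf s + 2 * s * Real.exp (-s ^ 2)) * Real.exp (r ^ 2) *
            (2 * r * (r ^ 4 + r ^ 2 + ε - 1 / 4) + 4 * r ^ 3 + 2 * r)
          + Real.exp (r ^ 2) * Real.exp (-s ^ 2) *
            (2 * r * (s - 2 * s * (r ^ 4 + s ^ 2 / 2 + ε)) - 8 * s * r ^ 3) := by
      show deriv (fun t => pderivS φ t s) r = _
      rw [e2]
      exact (lemRS h ε r s _ hd).deriv
    have A3 : pderivR φ r s =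
        s * deriv h r + Real.sqrt Real.pi * s * erf s * Real.exp (r ^ 2) *
            (2 * r * (r ^ 4 + r ^ 2 + ε - 1 / 4) + 4 * r ^ 3 + 2 * r)
          + Real.exp (r ^ 2) * Real.exp (-s ^ 2) *
            (2 * r * (r ^ 4 + s ^ 2 / 2 + ε) + 4 * r ^ 3) := by
      show deriv (fun t => φ t s) r = _
      rw [show (fun t => φ t s) = (fun t =>
          s * h t
            + Real.sqrt Real.pi * s * Real.exp (t ^ 2) * (t ^ 4 + t ^ 2 + ε - 1 / 4) * erf s
            + Real.exp (t ^ 2 - s ^ 2) * (t ^ 4 + s ^ 2 / 2 + ε)) from funext fun t => hφ t s]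
      exact (lemR h ε r s _ hd).deriv
    rw [A1, A2, A3]
    ring
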